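/- arXiv:2409.01010 — 8 statements merged into one kernel-verified Lean document; each statement's English description precedes it below -/
import Mathlib

section
/- For any four points x,y,z,w in a metric space (X,d), the four point condition is bounded by half the sum of the three point conditions over the four triples: fp(d;x,y,z,w) ≤ (1/2)[tp(d;x,y,z) + tp(d;x,y,w) + tp(d;x,z,w) + tp(d;y,z,w)]. -/
/-!
Doubling a term of the four point condition gives
`d x y + d z w - max (d x z + d y w) (d y z + d x w)`. The three point condition of a triple is
nonnegative and bounds a diagonal of the quadrilateral `x z y w` minus the larger of the two
sides at the remaining vertex. So the two triples through `x, y` bound `d x y` minus the smaller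
of the side maxima at `z` and `w`, and likewise for `z, w`. In any quadrilateral, these two
smaller side maxima add up to at most the larger of the two sums of opposite sides.
-/

noncomputable section

variable {Xt : Type*}

/-- Gromov product of `x,y` with base `w`. -/
def gp (d : Xt → Xt → ℝ) (w x y : Xt) : ℝ := (d x w + d y w - d x y) / 2

/-- One term of the four point condition. -/
def fpt (d : Xt → Xt → ℝ) (w x y z : Xt) : ℝ :=
  min (gp d w x z) (gp d w y z) - gp d w x y

/-- Four point condition with base `w`: max over all permutations of the triple `x,y,z`. -/
def fp (d : Xt → Xt → ℝ) (w x y z : Xt) : ℝ :=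
  max (max (max (fpt d w x y z) (fpt d w x z y)) (max (fpt d w y x z) (fpt d w y z x)))
      (max (fpt d w z x y) (fpt d w z y x))

/-- One term of the three point condition. -/
def tpt (d : Xt → Xt → ℝ) (x y z : Xt) : ℝ := d x z - max (d x y) (d y z)

/-- Three point condition: max over all permutations of `x,y,z`. -/
def tp (d : Xt → Xt → ℝ) (x y z : Xt) : ℝ :=
  max (max (max (tpt d x y z) (tpt d x z y)) (max (tpt d y x z) (tpt d y z x)))
      (max (tpt d z x y) (tpt d z y x))

theorem max_sub_max_nonneg (a b c : ℝ) :
    0 ≤ max (a - max b c) (max (b - max c a) (c - max a b)) := by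
  grind

theorem min_max_add_min_max_le (p₁ p₂ p₃ p₄ : ℝ) :
    min (max p₁ p₂) (max p₄ p₃) + min (max p₁ p₄) (max p₂ p₃) ≤
      max (p₁ + p₃) (p₂ + p₄) := by
  grind

section

variable {X : Type*} (d : X → X → ℝ)

theorem two_mul_fpt (w x y z : X) :
    2 * fpt d w x y z = d x y + d z w - max (d x z + d y w) (d y z + d x w) := by
  simp only [fpt, gp]
  grind

theorem tp_comm₁₂ (x y z : X) : tp d x y z = tp d y x z := by
  simp only [tp]
  ac_rfl

theorem tp_comm₂₃ (x y z : X) : tp d x y z = tp d x z y := by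
  simp only [tp]
  ac_rfl

theorem tpt_le_tp (x y z : X) : tpt d x y z ≤ tp d x y z :=
  le_max_of_le_left (le_max_of_le_left (le_max_left _ _))

def tpSum (x y z w : X) : ℝ := tp d x y z + tp d x y w + tp d x z w + tp d y z w

theorem tpSum_comm₁₂ (x y z w : X) : tpSum d x y z w = tpSum d y x z w := by
  simp only [tpSum, tp_comm₁₂ d x y, tp_comm₂₃ d y x, tp_comm₁₂ d x z w]
  ring

theorem tpSum_comm₂₃ (x y z w : X) : tpSum d x y z w = tpSum d x z y w := by
  simp only [tpSum, tp_comm₂₃ d x y z, tp_comm₁₂ d y z w]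
  ring

variable {d} (hd : ∀ a b, d a b = d b a)
include hd

theorem tp_nonneg (x y z : X) : 0 ≤ tp d x y z := by
  have hyzx : tpt d y z x ≤ tp d x y z :=
    (tpt_le_tp d y z x).trans_eq (by rw [tp_comm₁₂ d x y z, tp_comm₂₃])
  have hzxy : tpt d z x y ≤ tp d x y z :=
    (tpt_le_tp d z x y).trans_eq (by rw [tp_comm₂₃ d x y z, tp_comm₁₂])
  calc 0 ≤ max (tpt d x y z) (max (tpt d y z x) (tpt d z x y)) := by
        simpa only [tpt, hd y x, hd z x, hd z y] using
          max_sub_max_nonneg (d x z) (d x y) (d y z)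
    _ ≤ tp d x y z := max_le (tpt_le_tp d x y z) (max_le hyzx hzxy)

theorem add_sub_max_le_tpSum (x y z w : X) :
    d x y + d z w - max (d x z + d y w) (d y z + d x w) ≤ tpSum d x y z w := by
  have hz : d x y - max (d x z) (d y z) ≤ tp d x y z := by
    simpa only [tpt, hd z y, ← tp_comm₂₃] using tpt_le_tp d x z y
  have hw : d x y - max (d x w) (d y w) ≤ tp d x y w := by
    simpa only [tpt, hd w y, ← tp_comm₂₃] using tpt_le_tp d x w y
  have hx : d z w - max (d x z) (d x w) ≤ tp d x z w := by
    simpa only [tpt, hd z x, ← tp_comm₁₂] using tpt_le_tp d z x w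
  have hy : d z w - max (d y z) (d y w) ≤ tp d y z w := by
    simpa only [tpt, hd z y, ← tp_comm₁₂] using tpt_le_tp d z y w
  have hz₀ := tp_nonneg hd x y z
  have hw₀ := tp_nonneg hd x y w
  have hx₀ := tp_nonneg hd x z w
  have hy₀ := tp_nonneg hd y z w
  have hxy : d x y - (tp d x y z + tp d x y w) ≤
      min (max (d x z) (d y z)) (max (d x w) (d y w)) :=
    le_min (by linarith) (by linarith)
  have hzw : d z w - (tp d x z w + tp d y z w) ≤
      min (max (d x z) (d x w)) (max (d y z) (d y w)) :=
    le_min (by linarith) (by linarith)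
  have hquad := min_max_add_min_max_le (d x z) (d y z) (d y w) (d x w)
  rw [tpSum]
  linarith

theorem fpt_le_half_tpSum (w x y z : X) : fpt d w x y z ≤ 1 / 2 * tpSum d x y z w := by
  linarith [two_mul_fpt d w x y z, add_sub_max_le_tpSum hd x y z w]

end

/-- The four point condition is bounded by half the sum of the three point conditions
over the four triples. -/
theorem fp_le_half_sum_tp {X : Type*} [MetricSpace X] (x y z w : X) :
    fp (fun a b => dist a b) w x y z ≤
      (1 / 2) * (tp (fun a b => dist a b) x y z + tp (fun a b => dist a b) x y w +
        tp (fun a b => dist a b) x z w + tp (fun a b => dist a b) y z w) := by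
  have h := fpt_le_half_tpSum (d := fun a b : X => dist a b) dist_comm w
  change _ ≤ 1 / 2 * tpSum _ x y z w
  refine max_le (max_le (max_le ?_ ?_) (max_le ?_ ?_)) (max_le ?_ ?_)
  · exact h x y z
  · rw [tpSum_comm₂₃]
    exact h x z y
  · rw [tpSum_comm₁₂]
    exact h y x z
  · rw [tpSum_comm₁₂, tpSum_comm₂₃]
    exact h y z x
  · rw [tpSum_comm₂₃, tpSum_comm₁₂]
    exact h z x y
  · rw [tpSum_comm₁₂, tpSum_comm₂₃, tpSum_comm₁₂]
    exact h z y x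
end
end

section
/- Let d be a distance function on a finite set X of size n. For s > 0, let G_s = (X, E_s) be the graph with edges {(x,y) : d(x,y) ≤ s} and let B(G_s) denote the set of bad triangles (triples with exactly two of three edges present). Then the sum over all triples of the three point condition equals the integral over s of the number of bad triangles: Σ_{x,y,z} tp(d;x,y,z) = ∫_0^∞ |B(G_s)| ds. -/
/-! If the distances of a triple are `a ≤ b ≤ c`, it is a bad triangle of `G_s` exactly for
`s ∈ [b, c)`, and for a symmetric `d` its three point condition is `c - b`, the length of that
interval. Integrating the finite sum of these interval indicators termwise gives the identity. -/

noncomputable section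

variable {Xt : Type*}

open MeasureTheory

/-- Number of ordered triples of pairwise distinct points forming a bad triangle in the
`s`-neighbor graph `G_s` (each unordered bad triangle is counted 6 times). -/
def badCount {X : Type*} [Fintype X] [DecidableEq X] (d : X → X → ℝ) (s : ℝ) : ℕ :=
  (Finset.univ.filter (fun p : X × X × X =>
    p.1 ≠ p.2.1 ∧ p.2.1 ≠ p.2.2 ∧ p.1 ≠ p.2.2 ∧
    ((if d p.1 p.2.1 ≤ s then 1 else 0) + (if d p.2.1 p.2.2 ≤ s then 1 else 0) +
      (if d p.2.2 p.1 ≤ s then 1 else 0) = (2 : ℕ)))).card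

def median3 (a b c : ℝ) : ℝ := min (max a b) (min (max b c) (max a c))

def badScales {X : Type*} (d : X → X → ℝ) (p : X × X × X) : Set ℝ :=
  Set.Ico (median3 (d p.1 p.2.1) (d p.2.1 p.2.2) (d p.2.2 p.1))
    (max (d p.1 p.2.1) (max (d p.2.1 p.2.2) (d p.2.2 p.1)))

lemma ite_add_ite_add_ite_eq_two_iff (a b c s : ℝ) :
    ((if a ≤ s then 1 else 0) + (if b ≤ s then 1 else 0) + (if c ≤ s then 1 else 0) = (2 : ℕ)) ↔
      s ∈ Set.Ico (median3 a b c) (max a (max b c)) := by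
  rw [Set.mem_Ico, ← not_le]
  simp only [median3, min_le_iff, max_le_iff]
  by_cases ha : a ≤ s <;> by_cases hb : b ≤ s <;> by_cases hc : c ≤ s <;> simp [ha, hb, hc]

lemma tp_eq_max_sub_median3 {X : Type*} {d : X → X → ℝ} (hsym : ∀ x y, d x y = d y x)
    (x y z : X) :
    tp d x y z = max (d x y) (max (d y z) (d z x)) - median3 (d x y) (d y z) (d z x) := by
  simp only [tp, tpt, median3, hsym y x, hsym z y, hsym x z]
  grind

lemma setIntegral_Ioi_zero_indicator_Ico {m M : ℝ} (hm : 0 ≤ m) (hmM : m ≤ M) :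
    ∫ s in Set.Ioi 0, (Set.Ico m M).indicator 1 s = M - m := by
  rw [← integral_Ici_eq_integral_Ioi, setIntegral_indicator measurableSet_Ico,
    Set.inter_eq_right.2 fun s (hs : s ∈ Set.Ico m M) => Set.mem_Ici.2 (hm.trans hs.1)]
  simp [Real.volume_real_Ico_of_le hmM]

lemma badCount_eq_sum_indicator_badScales {X : Type*} [Fintype X] [DecidableEq X]
    (d : X → X → ℝ) (s : ℝ) :
    (badCount d s : ℝ) = ∑ p ∈ Finset.univ.filter (fun p : X × X × X =>
      p.1 ≠ p.2.1 ∧ p.2.1 ≠ p.2.2 ∧ p.1 ≠ p.2.2), (badScales d p).indicator 1 s := by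
  simp only [badCount, ← Finset.filter_filter, Finset.card_filter, badScales,
    ite_add_ite_add_ite_eq_two_iff, Set.indicator_apply, Pi.one_apply]
  push_cast
  rfl

lemma setIntegral_Ioi_zero_indicator_badScales {X : Type*} {d : X → X → ℝ}
    (hsym : ∀ x y, d x y = d y x) (hnn : ∀ x y, 0 ≤ d x y) (p : X × X × X) :
    ∫ s in Set.Ioi 0, (badScales d p).indicator 1 s = tp d p.1 p.2.1 p.2.2 := by
  rw [tp_eq_max_sub_median3 hsym, badScales, setIntegral_Ioi_zero_indicator_Ico]
  · exact le_min ((hnn _ _).trans (le_max_left _ _))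
      (le_min ((hnn _ _).trans (le_max_left _ _)) ((hnn _ _).trans (le_max_left _ _)))
  · exact (min_le_left _ _).trans (max_le_max_left _ (le_max_left _ _))

theorem sum_tp_eq_integral_badCount_general {X : Type*} [Fintype X] [DecidableEq X]
    (d : X → X → ℝ) (hsym : ∀ x y, d x y = d y x) (hnn : ∀ x y, 0 ≤ d x y) :
    (∑ x : X, ∑ y : X, ∑ z : X,
        if x ≠ y ∧ y ≠ z ∧ x ≠ z then tp d x y z else 0) =
      ∫ s in Set.Ioi (0 : ℝ), (badCount d s : ℝ) := by
  simp_rw [badCount_eq_sum_indicator_badScales]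
  rw [integral_finsetSum]
  · simp_rw [setIntegral_Ioi_zero_indicator_badScales hsym hnn, Finset.sum_filter,
      Fintype.sum_prod_type]
  · exact fun p _ =>
      (integrable_indicator_iff measurableSet_Ico).2 (integrableOn_const measure_Ico_lt_top.ne)

/-- The sum of the three point condition over all (ordered, pairwise distinct) triples equals
the integral over `s > 0` of the number of (ordered) bad triangles of `G_s`.
(Both sides count each unordered triple 6 times.) -/
theorem sum_tp_eq_integral_badCount {X : Type*} [Fintype X] [DecidableEq X]
    (d : X → X → ℝ) (hsym : ∀ x y, d x y = d y x) (hnn : ∀ x y, 0 ≤ d x y)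
    (hdiag : ∀ x, d x x = 0) :
    (∑ x : X, ∑ y : X, ∑ z : X,
        if x ≠ y ∧ y ≠ z ∧ x ≠ z then tp d x y z else 0) =
      ∫ s in Set.Ioi (0 : ℝ), (badCount d s : ℝ) :=
  sum_tp_eq_integral_badCount_general d hsym hnn
end
end

section
/- In a graph G = (V,E) on a vertex set C of size |C| ≥ 2 in which every vertex x ∈ C has at least |C|/2 neighbors within C, for every proper nonempty subset X ⊂ C, the number of edges between X and C \ X is at least |C|/2. -/
/-!
Let `k = |X|` and `d = |C|/2`. By symmetry of the boundary we may replace `X` by `C \ X`, so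
`k ≤ d`. A vertex of `X` has at most `k - 1` neighbours inside `X`, hence at least `d - k + 1`
in `C \ X`, so the boundary has at least `k (d - k + 1) = d + (k - 1)(d - k) ≥ d` edges.
-/

open Finset

namespace SimpleGraph

variable {V : Type*} (G : SimpleGraph V) [DecidableRel G.Adj]

theorem card_interedges_eq_sum_card_filter_adj (s t : Finset V) :
    #(G.interedges s t) = ∑ x ∈ s, #{y ∈ t | G.Adj x y} := by
  simp only [interedges_def, card_filter, sum_product]

theorem card_interedges_comm (s t : Finset V) :
    #(G.interedges s t) = #(G.interedges t s) :=
  have := G.symm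
  Rel.card_interedges_comm s t

section DecidableEq

variable [DecidableEq V]

theorem card_filter_adj_lt_card_filter_adj_sdiff_add_card {s u : Finset V} (hsu : s ⊆ u)
    {x : V} (hx : x ∈ s) :
    #{y ∈ u | G.Adj x y} < #{y ∈ u \ s | G.Adj x y} + #s := by
  have hinside : #{y ∈ s | G.Adj x y} < #s :=
    card_lt_card (filter_ssubset.2 ⟨x, hx, G.irrefl⟩)
  calc #{y ∈ u | G.Adj x y}
      = #({y ∈ s | G.Adj x y} ∪ {y ∈ u \ s | G.Adj x y}) := by
        rw [← filter_union, union_sdiff_of_subset hsu]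
    _ ≤ #{y ∈ s | G.Adj x y} + #{y ∈ u \ s | G.Adj x y} := card_union_le _ _
    _ < #{y ∈ u \ s | G.Adj x y} + #s := by omega

variable {G}

theorem card_mul_le_card_interedges_sdiff {C X : Finset V} {d : ℝ}
    (hdeg : ∀ x ∈ C, d ≤ #{y ∈ C | G.Adj x y}) (hXC : X ⊆ C) :
    #X * (d - #X + 1) ≤ #(G.interedges X (C \ X)) := by
  have hvertex : ∀ x ∈ X, d - #X + 1 ≤ #{y ∈ C \ X | G.Adj x y} := by
    intro x hx
    have hlt : (#{y ∈ C | G.Adj x y} : ℝ) + 1 ≤ #{y ∈ C \ X | G.Adj x y} + #X := by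
      exact_mod_cast G.card_filter_adj_lt_card_filter_adj_sdiff_add_card hXC hx
    linarith [hdeg x (hXC hx)]
  rw [card_interedges_eq_sum_card_filter_adj, ← nsmul_eq_mul, ← sum_const, Nat.cast_sum]
  exact sum_le_sum hvertex

theorem le_card_interedges_sdiff {C X : Finset V} {d : ℝ}
    (hdeg : ∀ x ∈ C, d ≤ #{y ∈ C | G.Adj x y}) (hXC : X ⊆ C) (hX : X.Nonempty)
    (hXd : #X ≤ d) :
    d ≤ #(G.interedges X (C \ X)) := by
  have hX₁ : (1 : ℝ) ≤ #X := by exact_mod_cast hX.card_pos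
  nlinarith [card_mul_le_card_interedges_sdiff hdeg hXC]

end DecidableEq

end SimpleGraph

open SimpleGraph in
theorem boundary_ge_half_general {V : Type*} [DecidableEq V] (G : SimpleGraph V) [DecidableRel G.Adj]
    (C : Finset V)
    (hdeg : ∀ x ∈ C, ((C.card : ℝ) / 2 ≤ ((C.filter (fun y => G.Adj x y)).card : ℝ)))
    (Xs : Finset V) (hsub : Xs ⊆ C) (hne : Xs.Nonempty) (hprop : Xs ≠ C) :
    (C.card : ℝ) / 2 ≤ (((Xs ×ˢ (C \ Xs)).filter (fun p => G.Adj p.1 p.2)).card : ℝ) := by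
  rw [← interedges_def]
  by_cases hsmall : (#Xs : ℝ) ≤ #C / 2
  · exact le_card_interedges_sdiff hdeg hsub hne hsmall
  · have hcompl : (C \ Xs).Nonempty :=
      sdiff_nonempty.2 fun hCX => hprop (hsub.antisymm hCX)
    have hcard : (#(C \ Xs) : ℝ) + #Xs = #C := by
      exact_mod_cast card_sdiff_add_card_eq_card hsub
    have := le_card_interedges_sdiff hdeg sdiff_subset hcompl (by linarith)
    rwa [Finset.sdiff_sdiff_eq_self hsub, card_interedges_comm] at this

/-- Isoperimetric property: if every vertex of `C` has at least `|C|/2` neighbors in `C`,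
then every proper nonempty subset `Xs ⊂ C` has boundary of size at least `|C|/2`. -/
theorem boundary_ge_half {V : Type*} [DecidableEq V] (G : SimpleGraph V) [DecidableRel G.Adj]
    (C : Finset V) (hC : 2 ≤ C.card)
    (hdeg : ∀ x ∈ C, ((C.card : ℝ) / 2 ≤ ((C.filter (fun y => G.Adj x y)).card : ℝ)))
    (Xs : Finset V) (hsub : Xs ⊆ C) (hne : Xs.Nonempty) (hprop : Xs ≠ C) :
    (C.card : ℝ) / 2 ≤ (((Xs ×ˢ (C \ Xs)).filter (fun p => G.Adj p.1 p.2)).card : ℝ) :=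
  boundary_ge_half_general G C hdeg Xs hsub hne hprop
end

section
/- Let G = (V,E) be a graph and C ⊆ V a cluster of size at least 2 such that every vertex of C has at least |C|/2 neighbors in C. Then for every non-edge (x,y) with x,y ∈ C, there exist at least two vertices z ∈ C such that both (x,z) and (y,z) are edges; consequently the number of non-edges inside C is at most half the number of bad triangles inside C. -/
/-!
The neighbours in `C` of two non-adjacent vertices `x ≠ y` of `C` lie in `C \ {x, y}`, a set of
size `|C| - 2`; if their degrees into `C` add up to at least `|C|`, the two neighbourhoods must
overlap in at least two vertices.

Every ordered bad triple has exactly one non-adjacent pair, so exactly one of its three cyclic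
rotations is an induced path `x - z - y`. Such paths are counted by summing the number of common
neighbours over the ordered non-adjacent pairs `(x, y)`, whence
`#bad = 3 · #paths ≥ 3 · 2 · #nonadjacent pairs`.
-/

open Finset

@[simps]
def rotateTriple (α : Type*) : α × α × α ≃ α × α × α where
  toFun t := (t.2.1, t.2.2, t.1)
  invFun t := (t.2.2, t.1, t.2.1)

theorem ite_add_ite_add_ite_eq_two_iff_s6 (p q r : Prop) [Decidable p] [Decidable q] [Decidable r] :
    ((if p then 1 else 0) + (if q then 1 else 0) + (if r then 1 else 0) = (2 : ℕ)) ↔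
      (p ∧ q ∧ ¬ r) ∨ (q ∧ r ∧ ¬ p) ∨ (r ∧ p ∧ ¬ q) := by
  by_cases p <;> by_cases q <;> by_cases r <;> simp_all

namespace SimpleGraph

variable {V : Type*} [DecidableEq V] (G : SimpleGraph V) [DecidableRel G.Adj] (C : Finset V)

def nonAdjPairs : Finset (V × V) :=
  (C ×ˢ C).filter (fun p => p.1 ≠ p.2 ∧ ¬ G.Adj p.1 p.2)

def inducedCherries : Finset (V × V × V) :=
  (C ×ˢ C ×ˢ C).filter
    (fun t => t.1 ≠ t.2.2 ∧ G.Adj t.1 t.2.1 ∧ G.Adj t.2.1 t.2.2 ∧ ¬ G.Adj t.1 t.2.2)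

def badTriples : Finset (V × V × V) :=
  (C ×ˢ C ×ˢ C).filter (fun t =>
    t.1 ≠ t.2.1 ∧ t.2.1 ≠ t.2.2 ∧ t.1 ≠ t.2.2 ∧
    ((if G.Adj t.1 t.2.1 then 1 else 0) + (if G.Adj t.2.1 t.2.2 then 1 else 0) +
      (if G.Adj t.2.2 t.1 then 1 else 0) = (2 : ℕ)))

variable {G C}

theorem two_le_card_filter_adj_and_adj {x y : V} (hx : x ∈ C) (hy : y ∈ C)
    (hxy : x ≠ y) (hnadj : ¬ G.Adj x y)
    (hdeg : #C ≤ #(C.filter (G.Adj x)) + #(C.filter (G.Adj y))) :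
    2 ≤ #(C.filter fun z => G.Adj x z ∧ G.Adj y z) := by
  have hsub : C.filter (G.Adj x) ∪ C.filter (G.Adj y) ⊆ C \ {x, y} := by
    intro z hz
    simp only [mem_union, mem_filter, mem_sdiff, mem_insert, mem_singleton] at hz ⊢
    rcases hz with ⟨hzC, hz⟩ | ⟨hzC, hz⟩
    · exact ⟨hzC, by rintro (rfl | rfl) <;> simp_all⟩
    · exact ⟨hzC, by rintro (rfl | rfl) <;> simp_all [G.adj_comm]⟩
  have hpair : {x, y} ⊆ C := by simp [insert_subset_iff, hx, hy]
  have hunion := card_le_card hsub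
  rw [card_sdiff_of_subset hpair, card_pair hxy] at hunion
  have hC : 2 ≤ #C := card_pair hxy ▸ card_le_card hpair
  have hinter := card_union_add_card_inter (C.filter (G.Adj x)) (C.filter (G.Adj y))
  rw [filter_and]
  omega

theorem card_inducedCherries :
    #(G.inducedCherries C) =
      ∑ p ∈ G.nonAdjPairs C, #(C.filter fun z => G.Adj p.1 z ∧ G.Adj p.2 z) := by
  rw [← card_sigma]
  refine card_nbij' (fun t => ⟨(t.1, t.2.2), t.2.1⟩) (fun s => (s.1.1, s.2, s.1.2))
    ?_ ?_ (fun _ _ => rfl) (fun _ _ => rfl)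
  · rintro ⟨a, b, c⟩ h
    simp only [inducedCherries, nonAdjPairs, coe_filter, mem_product, Set.mem_ofPred_eq,
      coe_sigma, Set.mem_sigma_iff] at h ⊢
    grind [G.adj_comm]
  · rintro ⟨⟨a, c⟩, b⟩ h
    simp only [inducedCherries, nonAdjPairs, coe_filter, mem_product, Set.mem_ofPred_eq,
      coe_sigma, Set.mem_sigma_iff] at h ⊢
    grind [G.adj_comm]

theorem badTriples_eq_union_map_rotateTriple :
    G.badTriples C = G.inducedCherries C ∪ (G.inducedCherries C).map (rotateTriple V).toEmbedding ∪
      (G.inducedCherries C).map (rotateTriple V).symm.toEmbedding := by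
  ext ⟨a, b, c⟩
  simp only [badTriples, inducedCherries, mem_union, mem_map_equiv, mem_filter, mem_product,
    ite_add_ite_add_ite_eq_two_iff_s6, Equiv.symm_symm, rotateTriple_apply, rotateTriple_symm_apply]
  grind [G.adj_comm, G.ne_of_adj]

theorem card_badTriples : #(G.badTriples C) = 3 * #(G.inducedCherries C) := by
  rw [badTriples_eq_union_map_rotateTriple, card_union_of_disjoint, card_union_of_disjoint,
    card_map, card_map]
  · ring
  all_goals
    rw [Finset.disjoint_left]
    rintro ⟨a, b, c⟩
    simp only [inducedCherries, mem_union, mem_map_equiv, mem_filter, mem_product,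
      Equiv.symm_symm, rotateTriple_apply, rotateTriple_symm_apply]
    grind [G.adj_comm]

end SimpleGraph

open SimpleGraph

theorem nonedges_le_half_badTriangles_general {V : Type*} [DecidableEq V] (G : SimpleGraph V)
    [DecidableRel G.Adj] (C : Finset V)
    (hdeg : ∀ x ∈ C, ((C.card : ℝ) / 2 ≤ ((C.filter (fun y => G.Adj x y)).card : ℝ))) :
    (∀ x ∈ C, ∀ y ∈ C, x ≠ y → ¬ G.Adj x y →
      2 ≤ (C.filter (fun z => G.Adj x z ∧ G.Adj y z)).card) ∧
    6 * ((C ×ˢ C).filter (fun p => p.1 ≠ p.2 ∧ ¬ G.Adj p.1 p.2)).card ≤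
      ((C ×ˢ C ×ˢ C).filter (fun t =>
        t.1 ≠ t.2.1 ∧ t.2.1 ≠ t.2.2 ∧ t.1 ≠ t.2.2 ∧
        ((if G.Adj t.1 t.2.1 then 1 else 0) + (if G.Adj t.2.1 t.2.2 then 1 else 0) +
          (if G.Adj t.2.2 t.1 then 1 else 0) = (2 : ℕ)))).card := by
  have hcommon : ∀ x ∈ C, ∀ y ∈ C, x ≠ y → ¬ G.Adj x y →
      2 ≤ #(C.filter fun z => G.Adj x z ∧ G.Adj y z) := by
    intro x hx y hy hxy hnadj
    refine two_le_card_filter_adj_and_adj hx hy hxy hnadj ?_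
    have hx' := hdeg x hx
    have hy' := hdeg y hy
    exact_mod_cast (by linarith : (#C : ℝ) ≤ #(C.filter (G.Adj x)) + #(C.filter (G.Adj y)))
  refine ⟨hcommon, ?_⟩
  change 6 * #(G.nonAdjPairs C) ≤ #(G.badTriples C)
  have hcherries : 2 * #(G.nonAdjPairs C) ≤ #(G.inducedCherries C) := by
    rw [card_inducedCherries, mul_comm, ← smul_eq_mul]
    refine card_nsmul_le_sum _ _ _ fun p hp => ?_
    simp only [nonAdjPairs, mem_filter, mem_product] at hp
    exact hcommon _ hp.1.1 _ hp.1.2 hp.2.1 hp.2.2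
  rw [card_badTriples]
  omega

/-- In a cluster `C` in which every vertex has at least `|C|/2` neighbors within `C`,
every non-edge of `C` has at least two common neighbors in `C`; consequently the number of
non-edges inside `C` is at most half the number of bad triangles inside `C`.
(Non-edges are counted as ordered pairs and bad triangles as ordered triples, so the
unordered inequality `N ≤ B/2` becomes `6·N_ordered ≤ B_ordered`.) -/
theorem nonedges_le_half_badTriangles {V : Type*} [DecidableEq V] (G : SimpleGraph V)
    [DecidableRel G.Adj] (C : Finset V) (hC : 2 ≤ C.card)
    (hdeg : ∀ x ∈ C, ((C.card : ℝ) / 2 ≤ ((C.filter (fun y => G.Adj x y)).card : ℝ))) :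
    (∀ x ∈ C, ∀ y ∈ C, x ≠ y → ¬ G.Adj x y →
      2 ≤ (C.filter (fun z => G.Adj x z ∧ G.Adj y z)).card) ∧
    6 * ((C ×ˢ C).filter (fun p => p.1 ≠ p.2 ∧ ¬ G.Adj p.1 p.2)).card ≤
      ((C ×ˢ C ×ˢ C).filter (fun t =>
        t.1 ≠ t.2.1 ∧ t.2.1 ≠ t.2.2 ∧ t.1 ≠ t.2.2 ∧
        ((if G.Adj t.1 t.2.1 then 1 else 0) + (if G.Adj t.2.1 t.2.2 then 1 else 0) +
          (if G.Adj t.2.2 t.1 then 1 else 0) = (2 : ℕ)))).card :=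
  nonedges_le_half_badTriangles_general G C hdeg
end

section
/- Let G = (V,E) and let X, Y be disjoint vertex subsets such that every x ∈ X has at least |X|/2 neighbors in X and every y ∈ Y has at least |Y|/2 neighbors in Y, and suppose X and Y are not highly connected (i.e., some x ∈ X has fewer than |Y|/2 neighbors in Y, or some y ∈ Y has fewer than |X|/2 neighbors in X). Then the number of edges between X and Y is at most 4 times the number of bad triangles of the form (x,x',y) with x,x' ∈ X, y ∈ Y, (x,x'),(x,y) ∈ E, (x',y) ∉ E, plus those of the form (x,y,y') with x ∈ X, y,y' ∈ Y, (y,y'),(x,y) ∈ E, (x,y') ∉ E. -/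
/-!
Call the two sides `A` and `B`, so that some `b₀ ∈ B` has fewer than `|A|/2` neighbours in `A`.
Minimum degree at least `|W|/2` inside `W` makes `W` an edge expander: every `S ⊆ W` with
`W \ S` nonempty has `|S| ≤ 2 e(S, W \ S)`.
For `S = N_A(b)` the edges leaving `S` inside `A` are exactly the bad triangles with apex `b`, so
every `b ∈ B` not complete to `A` has at most twice as many neighbours in `A` as bad triangles
at `b`. The vertices of `B` complete to `A` are counted from the other side: the vertices of `A`
complete to `B` all lie in `N(b₀)`, so more than half of `A` is not complete to `B`, and each such
`a` is adjacent to every vertex of `B` complete to `A`; applying expansion to `N_B(a)` bounds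
their contribution by four times the bad triangles with apex in `A`.
-/

open Finset

namespace SimpleGraph

variable {V : Type*} (G : SimpleGraph V) [DecidableRel G.Adj]

theorem card_interedges_eq_sum (s t : Finset V) :
    #(G.interedges s t) = ∑ v ∈ s, #{w ∈ t | G.Adj v w} := by
  rw [interedges_def, card_filter, sum_product]
  simp only [card_filter]

def HasHalfMinDegreeOn (W : Finset V) : Prop :=
  ∀ v ∈ W, #W ≤ 2 * #{w ∈ W | G.Adj v w}

/-- The pairs `(w, w')` forming a bad triangle `v ~ w ~ w'`, `v ≁ w'` with apex `v`. -/
def neighborCut (W : Finset V) (v : V) : Finset (V × V) :=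
  G.interedges {w ∈ W | G.Adj v w} {w ∈ W | ¬ G.Adj v w}

theorem sum_card_neighborCut_eq_card_filter_apex_fst (X Y : Finset V) :
    ∑ x ∈ X, #(G.neighborCut Y x) =
      #{t ∈ X ×ˢ Y ×ˢ Y | G.Adj t.2.1 t.2.2 ∧ G.Adj t.1 t.2.1 ∧ ¬ G.Adj t.1 t.2.2} := by
  rw [← card_sigma]
  refine card_nbij' (fun p => (p.1, p.2)) (fun t => ⟨t.1, t.2⟩) ?_ ?_ ?_ ?_ <;>
    intro _ <;> simp [neighborCut, mem_interedges_iff] <;> tauto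

theorem sum_card_neighborCut_eq_card_filter_apex_last (X Y : Finset V) :
    ∑ y ∈ Y, #(G.neighborCut X y) =
      #{t ∈ X ×ˢ X ×ˢ Y | G.Adj t.1 t.2.1 ∧ G.Adj t.1 t.2.2 ∧ ¬ G.Adj t.2.1 t.2.2} := by
  rw [← card_sigma]
  refine card_nbij' (fun p => (p.2.1, p.2.2, p.1)) (fun t => ⟨t.2.2, t.1, t.2.1⟩)
    ?_ ?_ ?_ ?_ <;> intro _ <;> simp [neighborCut, mem_interedges_iff, G.adj_comm] <;> tauto

variable {G}

theorem card_le_two_mul_card_filter_exists_not_adj {A B : Finset V} {b₀ : V} (hb₀ : b₀ ∈ B)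
    (hsparse : 2 * #{a ∈ A | G.Adj b₀ a} < #A) :
    #A ≤ 2 * #{a ∈ A | ∃ b ∈ B, ¬ G.Adj a b} := by
  have hcomplete : #{a ∈ A | ¬ ∃ b ∈ B, ¬ G.Adj a b} ≤ #{a ∈ A | G.Adj b₀ a} :=
    card_le_card fun a ha => by
      simp only [mem_filter, not_exists, not_and, not_not] at ha ⊢
      exact ⟨ha.1, (ha.2 b₀ hb₀).symm⟩
  have := card_filter_add_card_filter_not (s := A) (fun a => ∃ b ∈ B, ¬ G.Adj a b)
  omega

variable [DecidableEq V] {W S : Finset V}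

theorem HasHalfMinDegreeOn.card_add_two_le (hW : G.HasHalfMinDegreeOn W) (hS : S ⊆ W)
    {v : V} (hv : v ∈ S) : #W + 2 ≤ 2 * #S + 2 * #{w ∈ W \ S | G.Adj v w} := by
  have hsplit : #{w ∈ W | G.Adj v w} = #{w ∈ S | G.Adj v w} + #{w ∈ W \ S | G.Adj v w} := by
    rw [← card_union_of_disjoint (disjoint_filter_filter disjoint_sdiff), ← filter_union,
      union_sdiff_of_subset hS]
  have hloop : #{w ∈ S | G.Adj v w} < #S :=
    card_lt_card ⟨filter_subset _ _, fun h => G.irrefl (mem_filter.mp (h hv)).2⟩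
  have := hW v (hS hv)
  omega

theorem HasHalfMinDegreeOn.card_mul_card_add_two_le (hW : G.HasHalfMinDegreeOn W) (hS : S ⊆ W) :
    #S * (#W + 2) ≤ 2 * #S ^ 2 + 2 * #(G.interedges S (W \ S)) := by
  calc #S * (#W + 2) = ∑ _v ∈ S, (#W + 2) := by rw [sum_const, smul_eq_mul]
    _ ≤ ∑ v ∈ S, (2 * #S + 2 * #{w ∈ W \ S | G.Adj v w}) :=
      sum_le_sum fun _ hv => hW.card_add_two_le hS hv
    _ = _ := by
      rw [sum_add_distrib, sum_const, smul_eq_mul, ← mul_sum, card_interedges_eq_sum]; ring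

theorem HasHalfMinDegreeOn.card_le_two_mul_card_interedges (hW : G.HasHalfMinDegreeOn W)
    (hS : S ⊆ W) (hT : (W \ S).Nonempty) : #S ≤ 2 * #(G.interedges S (W \ S)) := by
  have hS' := hW.card_mul_card_add_two_le hS
  have hT' := hW.card_mul_card_add_two_le (sdiff_subset (s := W) (t := S))
  rw [Finset.sdiff_sdiff_eq_self hS, card_interedges_comm] at hT'
  have hcard := card_sdiff_add_card_eq_card hS
  have hpos := hT.card_pos
  rw [← hcard] at hS' hT'
  -- If `|S| ≤ |W \ S|`, each vertex of `S` has a neighbour outside `S`; otherwise each vertex of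
  -- `W \ S` has at least `(|S| - |W \ S|) / 2 + 1` neighbours in `S`.
  rcases le_or_gt #S #(W \ S) with h | h <;> nlinarith

theorem HasHalfMinDegreeOn.card_neighbors_le_two_mul_card_neighborCut
    (hW : G.HasHalfMinDegreeOn W) {v : V} (hv : ∃ w ∈ W, ¬ G.Adj v w) :
    #{w ∈ W | G.Adj v w} ≤ 2 * #(G.neighborCut W v) := by
  obtain ⟨w, hw, hvw⟩ := hv
  rw [neighborCut, filter_not]
  exact hW.card_le_two_mul_card_interedges (filter_subset _ _)
    ⟨w, mem_sdiff.2 ⟨hw, fun h => hvw (mem_filter.1 h).2⟩⟩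

theorem HasHalfMinDegreeOn.sum_card_neighbors_filter_le {A : Finset V}
    (hA : G.HasHalfMinDegreeOn A) (B : Finset V) :
    ∑ b ∈ B with ∃ a ∈ A, ¬ G.Adj b a, #{a ∈ A | G.Adj b a} ≤
      2 * ∑ b ∈ B, #(G.neighborCut A b) :=
  calc _ ≤ ∑ b ∈ B with ∃ a ∈ A, ¬ G.Adj b a, 2 * #(G.neighborCut A b) :=
        sum_le_sum fun _ hb => hA.card_neighbors_le_two_mul_card_neighborCut (mem_filter.1 hb).2
    _ ≤ ∑ b ∈ B, 2 * #(G.neighborCut A b) := sum_le_sum_of_subset (filter_subset _ _)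
    _ = _ := (mul_sum _ _ _).symm

theorem HasHalfMinDegreeOn.sum_card_neighbors_filter_not_le {A B : Finset V}
    (hB : G.HasHalfMinDegreeOn B) {b₀ : V} (hb₀ : b₀ ∈ B)
    (hsparse : 2 * #{a ∈ A | G.Adj b₀ a} < #A) :
    ∑ b ∈ B with ¬ ∃ a ∈ A, ¬ G.Adj b a, #{a ∈ A | G.Adj b a} ≤
      4 * ∑ a ∈ A, #(G.neighborCut B a) := by
  set C := {b ∈ B | ¬ ∃ a ∈ A, ¬ G.Adj b a}
  set A' := {a ∈ A | ∃ b ∈ B, ¬ G.Adj a b}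
  have hC : ∀ a ∈ A', #C ≤ #{b ∈ B | G.Adj a b} := fun a ha => card_le_card fun b hb => by
    simp only [C, mem_filter, not_exists, not_and, not_not] at hb ⊢
    exact ⟨hb.1, (hb.2 a (mem_filter.1 ha).1).symm⟩
  calc ∑ b ∈ C, #{a ∈ A | G.Adj b a}
      ≤ ∑ _b ∈ C, #A := sum_le_sum fun _ _ => card_filter_le _ _
    _ = #C * #A := by rw [sum_const, smul_eq_mul]
    _ ≤ #C * (2 * #A') :=
      Nat.mul_le_mul_left _ (card_le_two_mul_card_filter_exists_not_adj hb₀ hsparse)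
    _ = 2 * ∑ _a ∈ A', #C := by rw [sum_const, smul_eq_mul]; ring
    _ ≤ 2 * ∑ a ∈ A', 2 * #(G.neighborCut B a) := by
      gcongr with a ha
      exact (hC a ha).trans (hB.card_neighbors_le_two_mul_card_neighborCut (mem_filter.1 ha).2)
    _ ≤ 2 * ∑ a ∈ A, 2 * #(G.neighborCut B a) := by gcongr; exact filter_subset _ _
    _ = 4 * ∑ a ∈ A, #(G.neighborCut B a) := by rw [← mul_sum]; ring

theorem HasHalfMinDegreeOn.card_interedges_le {A B : Finset V} (hA : G.HasHalfMinDegreeOn A)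
    (hB : G.HasHalfMinDegreeOn B) {b₀ : V} (hb₀ : b₀ ∈ B)
    (hsparse : 2 * #{a ∈ A | G.Adj b₀ a} < #A) :
    #(G.interedges A B) ≤
      2 * ∑ b ∈ B, #(G.neighborCut A b) + 4 * ∑ a ∈ A, #(G.neighborCut B a) := by
  rw [card_interedges_comm, card_interedges_eq_sum,
    ← sum_filter_add_sum_filter_not B (fun b => ∃ a ∈ A, ¬ G.Adj b a)]
  exact add_le_add (hA.sum_card_neighbors_filter_le B)
    (hB.sum_card_neighbors_filter_not_le hb₀ hsparse)

end SimpleGraph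

theorem Nat.cast_div_two_le_cast_iff (n m : ℕ) : (n : ℝ) / 2 ≤ m ↔ n ≤ 2 * m := by
  rw [div_le_iff₀ two_pos, mul_comm]
  exact_mod_cast Iff.rfl

open SimpleGraph in
theorem edges_between_le_four_badTriangles_general {V : Type*} (G : SimpleGraph V)
    [DecidableRel G.Adj] (X Y : Finset V)
    (hX : ∀ x ∈ X, ((X.card : ℝ) / 2 ≤ ((X.filter (fun y => G.Adj x y)).card : ℝ)))
    (hY : ∀ y ∈ Y, ((Y.card : ℝ) / 2 ≤ ((Y.filter (fun z => G.Adj y z)).card : ℝ)))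
    (hnhc : ¬ ((∀ x ∈ X, ((Y.card : ℝ) / 2 ≤ ((Y.filter (fun y => G.Adj x y)).card : ℝ))) ∧
               (∀ y ∈ Y, ((X.card : ℝ) / 2 ≤ ((X.filter (fun x => G.Adj y x)).card : ℝ))))) :
    ((X ×ˢ Y).filter (fun p => G.Adj p.1 p.2)).card ≤
      4 * (((X ×ˢ X ×ˢ Y).filter (fun t =>
              G.Adj t.1 t.2.1 ∧ G.Adj t.1 t.2.2 ∧ ¬ G.Adj t.2.1 t.2.2)).card +
           ((X ×ˢ Y ×ˢ Y).filter (fun t =>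
              G.Adj t.2.1 t.2.2 ∧ G.Adj t.1 t.2.1 ∧ ¬ G.Adj t.1 t.2.2)).card) := by
  classical
  simp only [Nat.cast_div_two_le_cast_iff] at hX hY hnhc
  change #(G.interedges X Y) ≤ _
  rw [← sum_card_neighborCut_eq_card_filter_apex_last,
    ← sum_card_neighborCut_eq_card_filter_apex_fst]
  rcases not_and_or.mp hnhc with hsparse | hsparse <;> push Not at hsparse <;>
    obtain ⟨v, hv, hsparse⟩ := hsparse
  · have := HasHalfMinDegreeOn.card_interedges_le hY hX hv hsparse
    rw [card_interedges_comm] at this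
    omega
  · have := HasHalfMinDegreeOn.card_interedges_le hX hY hv hsparse
    omega

/-- If `X` and `Y` are disjoint, each internally half-connected, and not highly connected,
then the number of edges between `X` and `Y` is at most `4` times the number of bad triangles
of the two displayed forms. -/
theorem edges_between_le_four_badTriangles {V : Type*} [DecidableEq V] (G : SimpleGraph V)
    [DecidableRel G.Adj] (X Y : Finset V) (hdisj : Disjoint X Y)
    (hX : ∀ x ∈ X, ((X.card : ℝ) / 2 ≤ ((X.filter (fun y => G.Adj x y)).card : ℝ)))
    (hY : ∀ y ∈ Y, ((Y.card : ℝ) / 2 ≤ ((Y.filter (fun z => G.Adj y z)).card : ℝ)))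
    (hnhc : ¬ ((∀ x ∈ X, ((Y.card : ℝ) / 2 ≤ ((Y.filter (fun y => G.Adj x y)).card : ℝ))) ∧
               (∀ y ∈ Y, ((X.card : ℝ) / 2 ≤ ((X.filter (fun x => G.Adj y x)).card : ℝ))))) :
    ((X ×ˢ Y).filter (fun p => G.Adj p.1 p.2)).card ≤
      4 * (((X ×ˢ X ×ˢ Y).filter (fun t =>
              G.Adj t.1 t.2.1 ∧ G.Adj t.1 t.2.2 ∧ ¬ G.Adj t.2.1 t.2.2)).card +
           ((X ×ˢ Y ×ˢ Y).filter (fun t =>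
              G.Adj t.2.1 t.2.2 ∧ G.Adj t.1 t.2.1 ∧ ¬ G.Adj t.1 t.2.2)).card) :=
  edges_between_le_four_badTriangles_general G X Y hX hY hnhc
end

section
/- Let d be a metric on X, w ∈ X, M = max_x d(x,w), and define c_w(x,y) = 2M - d(x,w) - d(y,w) for distinct x,y. If d_U is an ultrametric on X with max(β_x, β_y) ≤ d_U(x,y) ≤ 2M for β_x = 2(M - d(x,w)), then d_T := d_U - c_w is a tree metric (satisfies the four point condition with δ = 0) with d_T(x,w) = d(x,w) for all x ∈ X. -/
/-!
Off the diagonal, `d_T(x, y) = d_U(x, y) - a x - a y` with `a x = M - d(x, w)`. Subtracting such a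
"vertex potential" shifts all three sums of the four point condition by the same amount
`a x + a y + a z + a t`, so the four point condition of the ultrametric `d_U` passes to `d_T`. The
lower bound `2 a x ≤ d_U(x, y)` is exactly what makes `d_T` nonnegative and keeps the triangle
inequality, and the bounds `2M ≤ d_U(x, w) ≤ 2M` pin down `d_T(x, w) = d(x, w)`.
-/

section FourPoint

variable {X : Type*}

def FourPoint (d : X → X → ℝ) : Prop :=
  ∀ x y z t, d x y + d z t ≤ max (d x z + d y t) (d x t + d y z)

/-- In each of the sixteen cases, `a + b` is at most `r + s`, `q + p` or their average. -/
lemma add_le_max_add_of_le_max {a b p q r s : ℝ} (ha₁ : a ≤ max r p) (ha₂ : a ≤ max q s)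
    (hb₁ : b ≤ max r q) (hb₂ : b ≤ max p s) : a + b ≤ max (r + s) (q + p) := by
  by_contra! h
  obtain ⟨hrs, hqp⟩ := max_lt_iff.mp h
  rcases le_max_iff.mp ha₁ with ha₁ | ha₁ <;> rcases le_max_iff.mp ha₂ with ha₂ | ha₂ <;>
    rcases le_max_iff.mp hb₁ with hb₁ | hb₁ <;> rcases le_max_iff.mp hb₂ with hb₂ | hb₂ <;>
    linarith

lemma fourPoint_of_ultra (d : X → X → ℝ) (hsymm : ∀ x y, d x y = d y x)
    (hult : ∀ x y z, d x y ≤ max (d x z) (d z y)) : FourPoint d := by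
  intro x y z t
  have h₁ := hult x y z
  have h₂ := hult x y t
  have h₃ := hult z t x
  have h₄ := hult z t y
  rw [hsymm z y] at h₁ h₄
  rw [hsymm t y] at h₂
  rw [hsymm z x] at h₃
  exact add_le_max_add_of_le_max h₁ h₂ h₃ h₄

lemma fourPoint_of_pairwise_ne (d : X → X → ℝ) (hself : ∀ x, d x x = 0)
    (hsymm : ∀ x y, d x y = d y x) (htri : ∀ x y z, d x z ≤ d x y + d y z)
    (h : ∀ x y z t, x ≠ y → z ≠ t → x ≠ z → x ≠ t → y ≠ z → y ≠ t →
      d x y + d z t ≤ max (d x z + d y t) (d x t + d y z)) :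
    FourPoint d := by
  intro x y z t
  by_cases hxy : x = y
  · subst hxy
    rw [hself, zero_add, ← hsymm z x]
    exact (htri z x t).trans (le_max_left _ _)
  by_cases hzt : z = t
  · subst hzt
    rw [hself, add_zero, ← hsymm z y]
    exact (htri x z y).trans (le_max_left _ _)
  by_cases hxz : x = z
  · subst hxz
    rw [hsymm y x]
    exact le_max_of_le_right (add_comm _ _).le
  by_cases hxt : x = t
  · subst hxt
    rw [hsymm z x, hsymm y x]
    exact le_max_of_le_left (add_comm _ _).le
  by_cases hyz : y = z
  · subst hyz
    exact le_max_left _ _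
  by_cases hyt : y = t
  · subst hyt
    rw [hself, add_zero, hsymm z y]
    exact le_max_right _ _
  exact h x y z t hxy hzt hxz hxt hyz hyt

end FourPoint

section SubShift

variable {X : Type*} [DecidableEq X] (dU : X → X → ℝ) (a : X → ℝ)

/-- `d_U - c` off the diagonal, for the cost `c(x, y) = a x + a y`; the paper's `c_w` is the case
`a x = M - d(x, w)`. -/
def subShift : X → X → ℝ := fun x y => if x = y then 0 else dU x y - (a x + a y)

variable {dU a}

lemma subShift_self (x : X) : subShift dU a x x = 0 := if_pos rfl

lemma subShift_of_ne {x y : X} (h : x ≠ y) : subShift dU a x y = dU x y - (a x + a y) := if_neg h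

lemma subShift_nonneg (hlow : ∀ x y, x ≠ y → max (2 * a x) (2 * a y) ≤ dU x y) (x y : X) :
    0 ≤ subShift dU a x y := by
  by_cases h : x = y
  · rw [h, subShift_self]
  · have := max_le_iff.mp (hlow x y h)
    rw [subShift_of_ne h]
    linarith

lemma subShift_comm (hsymm : ∀ x y, dU x y = dU y x) (x y : X) :
    subShift dU a x y = subShift dU a y x := by
  by_cases h : x = y
  · rw [h]
  · rw [subShift_of_ne h, subShift_of_ne (Ne.symm h), hsymm, add_comm (a x)]

/-- Both `d_U(x, y)` and `d_U(y, z)` are at least `2 a y`, and `d_U(x, z)` is at most one of them. -/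
lemma subShift_triangle (hlow : ∀ x y, x ≠ y → max (2 * a x) (2 * a y) ≤ dU x y)
    (hult : ∀ x y z, dU x y ≤ max (dU x z) (dU z y)) (x y z : X) :
    subShift dU a x z ≤ subShift dU a x y + subShift dU a y z := by
  by_cases hxz : x = z
  · rw [hxz, subShift_self]
    exact add_nonneg (subShift_nonneg hlow _ _) (subShift_nonneg hlow _ _)
  by_cases hxy : x = y
  · rw [hxy, subShift_self, zero_add]
  by_cases hyz : y = z
  · rw [hyz, subShift_self, add_zero]
  rw [subShift_of_ne hxz, subShift_of_ne hxy, subShift_of_ne hyz]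
  have hxy' : 2 * a y ≤ dU x y := (le_max_right _ _).trans (hlow x y hxy)
  have hyz' : 2 * a y ≤ dU y z := (le_max_left _ _).trans (hlow y z hyz)
  rcases le_max_iff.mp (hult x z y) with h | h <;> linarith

lemma subShift_fourPoint (hsymm : ∀ x y, dU x y = dU y x)
    (hlow : ∀ x y, x ≠ y → max (2 * a x) (2 * a y) ≤ dU x y)
    (hult : ∀ x y z, dU x y ≤ max (dU x z) (dU z y)) :
    FourPoint (subShift dU a) := by
  refine fourPoint_of_pairwise_ne _ subShift_self (subShift_comm hsymm)
    (subShift_triangle hlow hult) fun x y z t hxy hzt hxz hxt hyz hyt => ?_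
  have hU := fourPoint_of_ultra dU hsymm hult x y z t
  simp only [subShift_of_ne, *, ne_eq, not_false_eq_true]
  rcases le_max_iff.mp hU with h | h
  · exact le_max_of_le_left (by linarith)
  · exact le_max_of_le_right (by linarith)

end SubShift

theorem sub_cw_is_tree_metric_general {X : Type*} [MetricSpace X] [DecidableEq X] (w : X) (M : ℝ)
    (dU : X → X → ℝ)
    (hsym : ∀ x y, dU x y = dU y x)
    (hult : ∀ x y z, dU x y ≤ max (dU x z) (dU z y))
    (hlow : ∀ x y, x ≠ y →
      max (2 * (M - dist x w)) (2 * (M - dist y w)) ≤ dU x y)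
    (hup : ∀ x y, x ≠ y → dU x y ≤ 2 * M) :
    let dT : X → X → ℝ := fun x y =>
      if x = y then 0 else dU x y - (2 * M - dist x w - dist y w)
    (∀ x y, 0 ≤ dT x y) ∧ (∀ x y, dT x y = dT y x) ∧
    (∀ x y z, dT x z ≤ dT x y + dT y z) ∧
    (∀ x y z t, dT x y + dT z t ≤ max (dT x z + dT y t) (dT x t + dT y z)) ∧
    (∀ x, dT x w = dist x w) := by
  intro dT
  have hdT : dT = subShift dU fun x => M - dist x w := by
    funext x y
    simp only [dT, subShift]
    split_ifs <;> ring
  have hdist (x : X) : dT x w = dist x w := by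
    by_cases hx : x = w
    · rw [hx, hdT, subShift_self, dist_self]
    have h2M := (le_max_right _ _).trans (hlow x w hx)
    rw [dist_self] at h2M
    rw [hdT, subShift_of_ne hx, dist_self]
    linarith [hup x w hx]
  rw [hdT] at hdist ⊢
  exact ⟨subShift_nonneg hlow, subShift_comm hsym, subShift_triangle hlow hult,
    subShift_fourPoint hsym hlow hult, hdist⟩

/-- If `d_U` is an ultrametric with `max(β_x,β_y) ≤ d_U(x,y) ≤ 2M`, then
`d_T := d_U - c_w` is a tree metric (0-hyperbolic metric) with `d_T(x,w) = d(x,w)`. -/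
theorem sub_cw_is_tree_metric {X : Type*} [MetricSpace X] [DecidableEq X] (w : X) (M : ℝ)
    (hM : IsGreatest (Set.range fun x : X => dist x w) M)
    (dU : X → X → ℝ)
    (hsym : ∀ x y, dU x y = dU y x) (hdiag : ∀ x, dU x x = 0)
    (hnn : ∀ x y, 0 ≤ dU x y)
    (hult : ∀ x y z, dU x y ≤ max (dU x z) (dU z y))
    (hlow : ∀ x y, x ≠ y →
      max (2 * (M - dist x w)) (2 * (M - dist y w)) ≤ dU x y)
    (hup : ∀ x y, x ≠ y → dU x y ≤ 2 * M) :
    let dT : X → X → ℝ := fun x y =>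
      if x = y then 0 else dU x y - (2 * M - dist x w - dist y w)
    (∀ x y, 0 ≤ dT x y) ∧ (∀ x y, dT x y = dT y x) ∧
    (∀ x y z, dT x z ≤ dT x y + dT y z) ∧
    (∀ x y z t, dT x y + dT z t ≤ max (dT x z + dT y t) (dT x t + dT y z)) ∧
    (∀ x, dT x w = dist x w) :=
  sub_cw_is_tree_metric_general w M dU hsym hult hlow hup
end

section
/- With the notation of the rooted tree reduction: d metric on X, w ∈ X, M = max_x d(x,w), c_w(x,y) = 2M - d(x,w) - d(y,w), β_x = 2(M - d(x,w)); if d_{U'} is any ultrametric on X, then the clipped function d_U(x,y) := min(max(β_x, β_y, d_{U'}(x,y)), 2M) is again an ultrametric. -/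
/-!
The ultrametric inequality survives each of the three operations that build `d_U` from `d_{U'}`:
taking the maximum with `max (β x) (β y)` (the new terms are dominated by the `β`-terms of the
two sides), truncating at a constant (`min · c` is monotone and distributes over `max`), and
resetting the diagonal to `0` (harmless for a nonnegative function). Nonnegativity of `d_U`
comes from `β_x ≥ 0`, i.e. from `M` being the largest distance to `w`.
-/

def UltrametricIneq {X α : Type*} [LinearOrder α] (d : X → X → α) : Prop :=
  ∀ x y z, d x y ≤ max (d x z) (d z y)

namespace UltrametricIneq

variable {X α : Type*} [LinearOrder α] {d : X → X → α}

theorem max_pointwise (hd : UltrametricIneq d) (f : X → α) :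
    UltrametricIneq fun x y => max (max (f x) (f y)) (d x y) := by
  intro x y z
  refine max_le (max_le ?_ ?_)
    ((hd x y z).trans (max_le_max (le_max_right _ _) (le_max_right _ _)))
  · exact le_max_of_le_left (le_max_of_le_left (le_max_left _ _))
  · exact le_max_of_le_right (le_max_of_le_left (le_max_right _ _))

theorem min_const (hd : UltrametricIneq d) (c : α) :
    UltrametricIneq fun x y => min (d x y) c := fun x y z => by
  dsimp only
  rw [← min_max_distrib_right]
  exact min_le_min_right c (hd x y z)

theorem ite_eq_zero [Zero α] [DecidableEq X] (hd : UltrametricIneq d) (h0 : ∀ x y, 0 ≤ d x y) :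
    UltrametricIneq fun x y => if x = y then 0 else d x y := by
  intro x y z
  dsimp only
  by_cases hxy : x = y
  · rw [if_pos hxy]
    exact le_max_of_le_left (by split_ifs <;> simp [h0])
  by_cases hxz : x = z
  · subst hxz
    exact le_max_right _ _
  by_cases hzy : z = y
  · subst hzy
    exact le_max_left _ _
  simpa only [if_neg hxy, if_neg hxz, if_neg hzy] using hd x y z

end UltrametricIneq

theorem clip_is_ultrametric_general {X : Type*} [MetricSpace X] [DecidableEq X] (w : X) (M : ℝ)
    (hM : IsGreatest (Set.range fun x : X => dist x w) M)
    (dU' : X → X → ℝ)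
    (hsym : ∀ x y, dU' x y = dU' y x)
    (hult : ∀ x y z, dU' x y ≤ max (dU' x z) (dU' z y)) :
    let dU : X → X → ℝ := fun x y =>
      if x = y then 0 else
        min (max (max (2 * (M - dist x w)) (2 * (M - dist y w))) (dU' x y)) (2 * M)
    (∀ x y, dU x y = dU y x) ∧ (∀ x, dU x x = 0) ∧ (∀ x y, 0 ≤ dU x y) ∧
    (∀ x y z, dU x y ≤ max (dU x z) (dU z y)) := by
  intro dU
  have hdist_le : ∀ x, dist x w ≤ M := fun x => hM.2 ⟨x, rfl⟩
  have hM_nonneg : 0 ≤ M := dist_nonneg.trans (hdist_le w)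
  have hclip_nonneg : ∀ x y : X,
      0 ≤ min (max (max (2 * (M - dist x w)) (2 * (M - dist y w))) (dU' x y)) (2 * M) :=
    fun x y => le_min (le_max_of_le_left (le_max_of_le_left (by linarith [hdist_le x])))
      (by linarith)
  refine ⟨fun x y => ?_, fun x => if_pos rfl, fun x y => ?_,
    ((UltrametricIneq.max_pointwise hult _).min_const _).ite_eq_zero hclip_nonneg⟩
  · simp only [dU, eq_comm, hsym x y, max_comm (2 * (M - dist x w))]
  · simp only [dU]
    split_ifs
    exacts [le_rfl, hclip_nonneg x y]

/-- Clipping an ultrametric between `max(β_x,β_y)` and `2M` yields again an ultrametric. -/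
theorem clip_is_ultrametric {X : Type*} [MetricSpace X] [DecidableEq X] (w : X) (M : ℝ)
    (hM : IsGreatest (Set.range fun x : X => dist x w) M)
    (dU' : X → X → ℝ)
    (hsym : ∀ x y, dU' x y = dU' y x) (hdiag : ∀ x, dU' x x = 0)
    (hnn : ∀ x y, 0 ≤ dU' x y)
    (hult : ∀ x y z, dU' x y ≤ max (dU' x z) (dU' z y)) :
    let dU : X → X → ℝ := fun x y =>
      if x = y then 0 else
        min (max (max (2 * (M - dist x w)) (2 * (M - dist y w))) (dU' x y)) (2 * M)
    (∀ x y, dU x y = dU y x) ∧ (∀ x, dU x x = 0) ∧ (∀ x y, 0 ≤ dU x y) ∧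
    (∀ x y z, dU x y ≤ max (dU x z) (dU z y)) :=
  clip_is_ultrametric_general w M hM dU' hsym hult
end

section
/- Let d be a metric on X, w ∈ X, M = max_x d(x,w), c_w(x,y) = 2M - d(x,w) - d(y,w). Then (d + c_w)(x,y) = 2M - 2·gp_w(x,y), and consequently for any triple x,y,z, tp(d + c_w; x,y,z) = 2·fp_w(d; x,y,z). In particular, the sum over all triples x,y,z of tp(d + c_w; x,y,z) equals twice the sum over all triples x,y,z of fp_w(d; x,y,z). -/
noncomputable section

variable {Xt : Type*}

lemma key_tpt_fpt {X : Type*} [MetricSpace X] (w : X) (M : ℝ) (x y z : X) :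
    tpt (fun a b => dist a b + (2 * M - dist a w - dist b w)) x y z
      = 2 * fpt (fun a b => dist a b) w x z y := by
  simp only [tpt, fpt, gp]
  rw [dist_comm y z]
  rcases le_total (dist x y + (2 * M - dist x w - dist y w))
      (dist z y + (2 * M - dist y w - dist z w)) with h | h
  · rw [max_eq_right h, min_eq_right (by linarith)]; ring
  · rw [max_eq_left h, min_eq_left (by linarith)]; ring

/-- `(d + c_w)(x,y) = 2M - 2·gp_w(x,y)`; hence `tp(d + c_w) = 2·fp_w(d)` for every triple,
and the sums over all triples agree up to a factor of 2. -/
theorem tp_shift_eq_two_fp {X : Type*} [MetricSpace X] [Fintype X] [DecidableEq X]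
    (w : X) (M : ℝ) (hM : IsGreatest (Set.range fun x : X => dist x w) M) :
    let c : X → X → ℝ := fun x y => 2 * M - dist x w - dist y w
    (∀ x y : X, dist x y + c x y = 2 * M - 2 * gp (fun a b => dist a b) w x y) ∧
    (∀ x y z : X, tp (fun a b => dist a b + c a b) x y z =
      2 * fp (fun a b => dist a b) w x y z) ∧
    ((∑ x : X, ∑ y : X, ∑ z : X, tp (fun a b => dist a b + c a b) x y z) =
      2 * ∑ x : X, ∑ y : X, ∑ z : X, fp (fun a b => dist a b) w x y z) := by
  intro c
  have e2 : ∀ x y z : X, tp (fun a b => dist a b + c a b) x y z =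
      2 * fp (fun a b => dist a b) w x y z := by
    intro x y z
    show tp (fun a b => dist a b + (2 * M - dist a w - dist b w)) x y z = _
    simp only [tp, fp, key_tpt_fpt, mul_max_of_nonneg _ _ (by norm_num : (0:ℝ) ≤ 2)]
    ac_rfl
  refine ⟨fun x y => by simp only [c, gp]; ring, e2, ?_⟩
  simp only [e2, Finset.mul_sum]
end
end
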